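/- arXiv:1201.5933 — 2 statements merged into one kernel-verified Lean document; each statement's English description precedes it below -/
import Mathlib

section
/- For any natural number m ≥ 1, the vector x ∈ ℚ^m with entries x_j = (-1)^{m+j} (2m-j+1)! / ((j-1)! (m-j+1)!) for j = 1,…,m satisfies A x = v, where A is the m×m matrix with A_{i,j} = 1/(2m-i-j+2)! (indexing i,j from 1 to m) and v_i = 1/(m-i+1)!. -/
/-!
Entrywise, after factoring out `(-1)^(m+1) r!/m!`, the equation `(A x)_r = v_r` becomes
`∑_{j<m} (-1)^j C(m,j) C(2m-j,r) = -(-1)^m C(m,r)`. Adding the term `j = m` turns the left side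
into an `m`-th forward difference of the polynomial `C(·,r)` of degree `r < m`, which vanishes.
-/

open Finset Nat fwdDiff

theorem fwdDiff_iter_choose_eq_zero_of_lt {r n : ℕ} (h : r < n) :
    (Δ_[1])^[n] (fun x ↦ x.choose r : ℕ → ℤ) = 0 := by
  obtain ⟨k, rfl⟩ := Nat.exists_eq_add_of_lt h
  have hconst : (Δ_[1])^[r] (fun x ↦ x.choose r : ℕ → ℤ) = fun _ ↦ 1 := by
    simpa using fwdDiff_iter_choose 0 r
  rw [show r + k + 1 = (k + 1) + r by omega, Function.iterate_add_apply, hconst,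
    Function.iterate_succ_apply, fwdDiff_const]
  exact Function.iterate_fixed (fwdDiff_const 1 0) k

theorem sum_range_neg_one_pow_mul_choose_mul_choose_eq_zero {r n : ℕ} (h : r < n) (y : ℕ) :
    ∑ k ∈ range (n + 1), (-1 : ℤ) ^ k * n.choose k * (y + n - k).choose r = 0 := by
  have hdiff := congr_fun (fwdDiff_iter_choose_eq_zero_of_lt h) y
  rw [fwdDiff_iter_eq_sum_shift, ← sum_range_reflect, Pi.zero_apply] at hdiff
  rw [← hdiff]
  refine sum_congr rfl fun k hk ↦ ?_
  have hkn : k ≤ n := Nat.lt_succ_iff.mp (mem_range.mp hk)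
  rw [Nat.add_sub_cancel, Nat.sub_sub_self hkn, Nat.choose_symm hkn, smul_eq_mul, smul_eq_mul,
    mul_one, show y + (n - k) = y + n - k by omega]

theorem sum_range_neg_one_pow_mul_choose_mul_choose_add_self {r m : ℕ} (hr : r < m) :
    ∑ j ∈ range m, (-1 : ℚ) ^ j * m.choose j * (m + m - j).choose r =
      -((-1) ^ m * m.choose r) := by
  have h := sum_range_neg_one_pow_mul_choose_mul_choose_eq_zero hr m
  rw [sum_range_succ, Nat.choose_self, Nat.cast_one, mul_one, Nat.add_sub_cancel] at h
  have hq : (∑ j ∈ range m, (-1 : ℚ) ^ j * m.choose j * (m + m - j).choose r) +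
      (-1) ^ m * m.choose r = 0 := by exact_mod_cast h
  linear_combination hq

theorem factorial_div_eq_choose_mul_choose {m n j r : ℕ} (hj : j ≤ m) (hr : r ≤ n) :
    (n ! : ℚ) / (j ! * (m - j)! * (n - r)!) = r ! / m ! * m.choose j * n.choose r := by
  rw [Nat.cast_choose ℚ hj, Nat.cast_choose ℚ hr]
  field_simp

theorem hankel_system_solution_general (m : ℕ)
    (A : Matrix (Fin m) (Fin m) ℚ)
    (hA : ∀ i j : Fin m,
      A i j = 1 / ((2 * m + 2 - ((i : ℕ) + 1) - ((j : ℕ) + 1)).factorial : ℚ))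
    (v : Fin m → ℚ)
    (hv : ∀ i : Fin m, v i = 1 / ((m + 1 - ((i : ℕ) + 1)).factorial : ℚ))
    (x : Fin m → ℚ)
    (hx : ∀ j : Fin m,
      x j = (-1 : ℚ) ^ (m + ((j : ℕ) + 1)) * ((2 * m + 1 - ((j : ℕ) + 1)).factorial : ℚ) /
        (((((j : ℕ) + 1) - 1).factorial : ℚ) * ((m + 1 - ((j : ℕ) + 1)).factorial : ℚ))) :
    A.mulVec x = v := by
  funext i
  set r : ℕ := (i : ℕ)
  have hr : r < m := i.isLt
  have hterm : ∀ j : Fin m, A i j * x j = (-1) ^ (m + 1) * r ! / m ! *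
      ((-1) ^ (j : ℕ) * m.choose j * (m + m - j).choose r) := by
    intro j
    have hj : (j : ℕ) < m := j.isLt
    rw [hA, hx, show 2 * m + 2 - (r + 1) - (j + 1) = (m + m - j) - r by omega,
      show 2 * m + 1 - (j + 1) = m + m - j by omega, show m + 1 - (j + 1) = m - j by omega,
      Nat.add_sub_cancel, show m + (j + 1) = m + 1 + j by omega, pow_add]
    have hfac := factorial_div_eq_choose_mul_choose (m := m) (n := m + m - j) hj.le
      (show r ≤ m + m - j by omega)
    linear_combination (-1 : ℚ) ^ (m + 1) * (-1) ^ (j : ℕ) * hfac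
  rw [Matrix.mulVec, dotProduct, sum_congr rfl fun j _ ↦ hterm j,
    Fin.sum_univ_eq_sum_range (fun j ↦ (-1 : ℚ) ^ (m + 1) * r ! / m ! *
      ((-1) ^ j * m.choose j * (m + m - j).choose r)) m, ← mul_sum,
    sum_range_neg_one_pow_mul_choose_mul_choose_add_self hr, hv,
    show m + 1 - (r + 1) = m - r by omega, Nat.cast_choose ℚ hr.le]
  have hsign : ((-1 : ℚ) ^ m) ^ 2 = 1 := by
    rw [← pow_mul', Even.neg_one_pow ⟨m, two_mul m⟩]
  field_simp
  linear_combination hsign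

/-- For `m ≥ 1`, the vector `x` with `x_j = (-1)^{m+j} (2m-j+1)!/((j-1)!(m-j+1)!)`
(for `j = 1,…,m`) satisfies `A x = v`, where `A_{i,j} = 1/(2m-i-j+2)!` and
`v_i = 1/(m-i+1)!` (indices `1,…,m`). -/
theorem hankel_system_solution (m : ℕ) (hm : 1 ≤ m)
    (A : Matrix (Fin m) (Fin m) ℚ)
    (hA : ∀ i j : Fin m,
      A i j = 1 / ((2 * m + 2 - ((i : ℕ) + 1) - ((j : ℕ) + 1)).factorial : ℚ))
    (v : Fin m → ℚ)
    (hv : ∀ i : Fin m, v i = 1 / ((m + 1 - ((i : ℕ) + 1)).factorial : ℚ))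
    (x : Fin m → ℚ)
    (hx : ∀ j : Fin m,
      x j = (-1 : ℚ) ^ (m + ((j : ℕ) + 1)) * ((2 * m + 1 - ((j : ℕ) + 1)).factorial : ℚ) /
        (((((j : ℕ) + 1) - 1).factorial : ℚ) * ((m + 1 - ((j : ℕ) + 1)).factorial : ℚ))) :
    A.mulVec x = v :=
  hankel_system_solution_general m A hA v hv x hx
end

section
/- Let m ≥ 3 be odd, n = 2m, and consider the basic G_a-action on V = k^{n+1} over an algebraically closed field k of characteristic zero. Let a = e_m (the m-th standard basis vector) and b = e_m + e_{m+1}. Then a and b are not separated by any polynomial invariant of the action (i.e., f(a) = f(b) for all invariant polynomials f), yet (a,b) is not in the graph of the action and b_m ≠ (-1)^m a_m. -/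
/-- The basic `G_a`-action on `k^{n+1}`. -/
def gaAct (k : Type*) [Field k] (n : ℕ) (t : k) (z : Fin (n + 1) → k) :
    Fin (n + 1) → k :=
  fun j => ∑ i ∈ Finset.Iic j,
    t ^ ((j : ℕ) - (i : ℕ)) / (((j : ℕ) - (i : ℕ)).factorial : k) * z i

/-!
In the basis `x^(n-i)/(n-i)!` of the polynomials of degree `≤ n`, the action of `t` on
`k^{n+1}` is the translation `p(x) ↦ p(x + t)`. For `deg q ≤ m` the curve `s ↦ q(x) (1 - s x)^m` of
polynomials of degree `≤ 2m` passes through `q` at `s = 0`, and its translate by `1/s` is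
`(-1)^m x^m ∑_j q_j s^(m-j) (s x + 1)^j`, again polynomial in `s`, with value `(-1)^m q_m x^m`
at `s = 0`. An invariant takes the same value on both curves for `s ≠ 0`, hence also at `s = 0`.
So invariants do not separate polynomials of degree `≤ m` with the same coefficient of `x^m`,
such as `a = x^m/m!` and `b = x^m/m! + x^(m-1)/(m-1)!`.
-/

open Polynomial Finset

theorem eval_curve_zero_eq_of_forall_ne_zero {R σ : Type*} [CommRing R] [IsDomain R] [Infinite R]
    (f : MvPolynomial σ R) (x y : σ → R[X])
    (h : ∀ s ≠ 0, MvPolynomial.eval (fun i => (x i).eval s) f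
      = MvPolynomial.eval (fun i => (y i).eval s) f) :
    MvPolynomial.eval (fun i => (x i).eval 0) f = MvPolynomial.eval (fun i => (y i).eval 0) f := by
  have eval_eval₂ (z : σ → R[X]) (s : R) :
      (MvPolynomial.eval₂ C z f).eval s = MvPolynomial.eval (fun i => (z i).eval s) f := by
    rw [MvPolynomial.polynomial_eval_eval₂, show (evalRingHom s).comp C = .id R by ext; simp]
    rfl
  have hxy : MvPolynomial.eval₂ C x f = MvPolynomial.eval₂ C y f :=
    Polynomial.eq_of_infinite_eval_eq _ _ <| (Set.finite_singleton 0).infinite_compl.mono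
      fun s hs => by simpa only [Set.mem_ofPred_eq, eval_eval₂] using h s hs
  simpa only [eval_eval₂] using congrArg (eval 0) hxy

theorem Fin.sum_Iic_eq_sum_range {M : Type*} [AddCommMonoid M] {n : ℕ} (j : Fin (n + 1))
    (g : ℕ → M) : ∑ i ∈ Iic j, g i = ∑ i ∈ range (j + 1), g i := by
  rw [Nat.range_succ_eq_Iic, ← Fin.map_valEmbedding_Iic, sum_map]
  rfl

/-- The coordinates of `p` in the basis `x^(n-i)/(n-i)!` of the polynomials of degree `≤ n`;
in these coordinates `gaAct` is translation of the variable (`gaAct_taylorCoords`). -/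
def taylorCoords {R : Type*} [CommSemiring R] (n : ℕ) (p : R[X]) : Fin (n + 1) → R :=
  fun i => ((n - i : ℕ).factorial : R) * p.coeff (n - i)

section taylorCoords

variable {R : Type*} [CommSemiring R]

theorem taylorCoords_add (n : ℕ) (p q : R[X]) :
    taylorCoords n (p + q) = taylorCoords n p + taylorCoords n q := by
  ext i; simp [taylorCoords, mul_add]

theorem taylorCoords_map {S : Type*} [CommSemiring S] (n : ℕ) (φ : R →+* S) (p : R[X]) :
    taylorCoords n (p.map φ) = fun i => φ (taylorCoords n p i) := by
  ext i; simp [taylorCoords]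

end taylorCoords

section GaAction

variable {k : Type*} [Field k]

theorem gaAct_taylorCoords [CharZero k] {n : ℕ} (t : k) {p : k[X]} (hp : p.natDegree ≤ n) :
    gaAct k n t (taylorCoords n p) = taylorCoords n (taylor t p) := by
  ext j
  have hj : (j : ℕ) ≤ n := Nat.lt_succ_iff.mp j.isLt
  have hdeg : (hasseDeriv (n - j) p).natDegree < j + 1 := by
    have := natDegree_hasseDeriv_le p (n - j); omega
  simp only [gaAct, taylorCoords]
  rw [Fin.sum_Iic_eq_sum_range j (fun i => t ^ ((j : ℕ) - i) / ((j - i : ℕ).factorial : k)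
      * (((n - i : ℕ).factorial : k) * p.coeff (n - i))), taylor_coeff, eval_eq_sum_range' hdeg,
    mul_sum, ← sum_range_reflect]
  refine sum_congr rfl fun l hl => ?_
  have hl : l ≤ j := Nat.lt_succ_iff.mp (mem_range.mp hl)
  rw [hasseDeriv_coeff, show (j : ℕ) - (j + 1 - 1 - l) = l by omega,
    show n - (j + 1 - 1 - l) = l + (n - j) by omega]
  have hl! : (l.factorial : k) ≠ 0 := Nat.cast_ne_zero.mpr l.factorial_ne_zero
  rw [← Nat.add_choose_mul_factorial_mul_factorial l (n - j)]
  push_cast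
  field_simp

theorem taylor_inv_mul_one_sub_C_mul_X_pow {s : k} (hs : s ≠ 0) {m : ℕ} {q : k[X]}
    (hq : q.natDegree ≤ m) :
    taylor s⁻¹ (q * (1 - C s * X) ^ m)
      = (-1) ^ m * X ^ m * ∑ j ∈ range (m + 1), C (q.coeff j * s ^ (m - j)) * (C s * X + 1) ^ j := by
  have hlin : C s * X + 1 = C s * (X + C s⁻¹) := by
    rw [mul_add, ← C_mul, mul_inv_cancel₀ hs, C_1]
  have hfactor : taylor s⁻¹ (1 - C s * X) = -1 * X * C s := by
    rw [taylor_apply, sub_comp, one_comp, mul_comp, C_comp, X_comp, ← hlin]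
    ring
  have hscaled : C (s ^ m) * taylor s⁻¹ q
      = ∑ j ∈ range (m + 1), C (q.coeff j * s ^ (m - j)) * (C s * X + 1) ^ j := by
    rw [taylor_apply, comp_eq_sum_left, sum_over_range' _ (by simp) (m + 1) (by omega), mul_sum]
    refine sum_congr rfl fun j hj => ?_
    rw [← Nat.sub_add_cancel (Nat.lt_succ_iff.mp (mem_range.mp hj)), hlin, mul_pow, pow_add,
      Nat.add_sub_cancel]
    simp only [map_mul, map_pow]
    ring
  rw [taylor_mul, taylor_pow, hfactor, ← hscaled]
  simp only [map_pow]
  ring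

theorem gaAct_indicator_apply_of_le {n : ℕ} (t : k) {d : ℕ} {j : Fin (n + 1)} (hdj : d ≤ j) :
    gaAct k n t (fun i => if (i : ℕ) = d then 1 else 0) j
      = t ^ ((j : ℕ) - d) / ((j - d : ℕ).factorial : k) := by
  simp only [gaAct]
  rw [Fin.sum_Iic_eq_sum_range j
    (fun i => t ^ ((j : ℕ) - i) / ((j - i : ℕ).factorial : k) * if i = d then 1 else 0)]
  simp [hdj]

theorem taylorCoords_C_inv_factorial_mul_X_pow [CharZero k] {n d : ℕ} (hd : d ≤ n) :
    taylorCoords n (C ((d.factorial : k)⁻¹) * X ^ d)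
      = fun i : Fin (n + 1) => if (i : ℕ) = n - d then (1 : k) else 0 := by
  ext i
  have hi : (i : ℕ) ≤ n := Nat.lt_succ_iff.mp i.isLt
  by_cases h : (i : ℕ) = n - d
  · have hd! : (d.factorial : k) ≠ 0 := Nat.cast_ne_zero.mpr d.factorial_ne_zero
    simp [taylorCoords, h, Nat.sub_sub_self hd, hd!]
  · simp [taylorCoords, h, show n - i ≠ d by omega]

variable (k) in
def IsGaInvariant (n : ℕ) (f : MvPolynomial (Fin (n + 1)) k) : Prop :=
  ∀ (t : k) (z : Fin (n + 1) → k), MvPolynomial.eval (gaAct k n t z) f = MvPolynomial.eval z f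

theorem IsGaInvariant.eval_taylorCoords_eq [CharZero k] {m : ℕ}
    {f : MvPolynomial (Fin (2 * m + 1)) k} (hf : IsGaInvariant k (2 * m) f) {q : k[X]}
    (hq : q.natDegree ≤ m) :
    MvPolynomial.eval (taylorCoords (2 * m) q) f
      = MvPolynomial.eval (taylorCoords (2 * m) (C ((-1) ^ m * q.coeff m) * X ^ m)) f := by
  -- In `k[X][X]` the outer variable is `x` and the curve parameter `s` is `C X`.
  let P : k[X][X] := q.map C * (1 - C X * X) ^ m
  let R : k[X][X] := (-1) ^ m * X ^ m *
    ∑ j ∈ range (m + 1), C (C (q.coeff j) * X ^ (m - j)) * (C X * X + 1) ^ j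
  have hP (s : k) : P.map (evalRingHom s) = q * (1 - C s * X) ^ m := by
    have hC : (evalRingHom s).comp C = RingHom.id k := by ext; simp
    simp [P, Polynomial.map_map, hC]
  have hR (s : k) : R.map (evalRingHom s) = (-1) ^ m * X ^ m *
      ∑ j ∈ range (m + 1), C (q.coeff j * s ^ (m - j)) * (C s * X + 1) ^ j := by
    simp [R, Polynomial.map_sum]
  have hP0 : P.map (evalRingHom 0) = q := by simp [hP]
  have hR0 : R.map (evalRingHom 0) = C ((-1) ^ m * q.coeff m) * X ^ m := by
    rw [hR, sum_eq_single_of_mem m (self_mem_range_succ m) fun j hj hjm => by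
      rw [zero_pow (by grind), mul_zero, C_0, zero_mul]]
    simp only [Nat.sub_self, pow_zero, mul_one, C_0, zero_mul, zero_add, one_pow, map_mul, map_pow,
      map_neg, map_one]
    ring
  have hcurve (S : k[X][X]) (s : k) : (fun i => (taylorCoords (2 * m) S i).eval s)
      = taylorCoords (2 * m) (S.map (evalRingHom s)) := by
    rw [taylorCoords_map]; rfl
  have key := eval_curve_zero_eq_of_forall_ne_zero f (taylorCoords (2 * m) P)
    (taylorCoords (2 * m) R) fun s hs => by
      have hdeg : (q * (1 - C s * X) ^ m).natDegree ≤ 2 * m := by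
        compute_degree
        omega
      rw [hcurve, hcurve, hP, hR, ← taylor_inv_mul_one_sub_C_mul_X_pow hs hq,
        ← gaAct_taylorCoords _ hdeg, hf]
  rwa [hcurve, hcurve, hP0, hR0] at key

theorem IsGaInvariant.eval_taylorCoords_eq_of_coeff_eq [CharZero k] {m : ℕ}
    {f : MvPolynomial (Fin (2 * m + 1)) k} (hf : IsGaInvariant k (2 * m) f) {p q : k[X]}
    (hp : p.natDegree ≤ m) (hq : q.natDegree ≤ m) (hpq : p.coeff m = q.coeff m) :
    MvPolynomial.eval (taylorCoords (2 * m) p) f = MvPolynomial.eval (taylorCoords (2 * m) q) f := by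
  rw [hf.eval_taylorCoords_eq hp, hf.eval_taylorCoords_eq hq, hpq]

end GaAction

/-- Let `m ≥ 3` be odd, `n = 2m`, and consider the basic `G_a`-action on `k^{n+1}`
over an algebraically closed field `k` of characteristic zero. The points
`a = e_m` and `b = e_m + e_{m+1}` are not separated by any polynomial invariant,
yet `(a,b)` is not in the graph of the action, and `b_m ≠ (-1)^m a_m`. -/
theorem invariants_do_not_separate (k : Type*) [Field k] [CharZero k]
    (m : ℕ) (hm : 3 ≤ m) (hodd : Odd m)
    (a b : Fin (2 * m + 1) → k)
    (haa : a = fun i : Fin (2 * m + 1) => if (i : ℕ) = m then (1 : k) else 0)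
    (hbb : b = fun i : Fin (2 * m + 1) =>
      (if (i : ℕ) = m then (1 : k) else 0) + (if (i : ℕ) = m + 1 then (1 : k) else 0)) :
    (∀ f : MvPolynomial (Fin (2 * m + 1)) k,
      (∀ (t : k) (z : Fin (2 * m + 1) → k),
        MvPolynomial.eval (gaAct k (2 * m) t z) f = MvPolynomial.eval z f) →
      MvPolynomial.eval a f = MvPolynomial.eval b f) ∧
    (¬ ∃ t : k, gaAct k (2 * m) t a = b) ∧
    b ⟨m, by omega⟩ ≠ (-1 : k) ^ m * a ⟨m, by omega⟩ := by
  refine ⟨fun f hf => ?_, fun ⟨t, ht⟩ => ?_, ?_⟩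
  · let qa : k[X] := C ((m.factorial : k)⁻¹) * X ^ m
    let qb : k[X] := qa + C (((m - 1).factorial : k)⁻¹) * X ^ (m - 1)
    have ha : a = taylorCoords (2 * m) qa := by
      rw [haa, taylorCoords_C_inv_factorial_mul_X_pow (by omega), show 2 * m - m = m by omega]
    have hb : b = taylorCoords (2 * m) qb := by
      rw [hbb, taylorCoords_add, ← ha, haa, taylorCoords_C_inv_factorial_mul_X_pow (by omega),
        show 2 * m - (m - 1) = m + 1 by omega]
      rfl
    rw [ha, hb]
    refine IsGaInvariant.eval_taylorCoords_eq_of_coeff_eq hf ?_ ?_ ?_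
    · simp only [qa]; compute_degree
    · simp only [qb, qa]; compute_degree
    · simp [qb, show m ≠ m - 1 by omega]
  · have h1 := congrFun ht ⟨m + 1, by omega⟩
    have h2 := congrFun ht ⟨m + 2, by omega⟩
    rw [haa, gaAct_indicator_apply_of_le t (by simp)] at h1 h2
    simp [hbb] at h1 h2
    simp [h1] at h2
  · rw [haa, hbb, hodd.neg_one_pow]
    norm_num
end
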